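/- (Iwasawa decomposition for GL(n,ℝ).) For every n ≥ 1 and every invertible n×n real matrix g, there exist a unique upper triangular matrix x with all diagonal entries equal to 1, a unique diagonal matrix y with all diagonal entries strictly positive, and a unique orthogonal matrix k ∈ O(n,ℝ), such that g = x·y·k. -/

import Mathlib

/-!
Existence: `g gᵀ` is positive definite. Normalising the LDL decomposition of its inverse gives a
unit lower triangular `L` with `L (g gᵀ)⁻¹ Lᵀ = D` diagonal and positive, hence
`g gᵀ = x D⁻¹ xᵀ` with `x = Lᵀ` unit upper triangular; with `y = D^{-1/2}` the matrix
`k = (x y)⁻¹ g` is orthogonal.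

Uniqueness: if `x y k = x' y' k'`, then `(x' y')⁻¹ (x y) = k' kᵀ` is upper triangular with positive
diagonal and orthogonal, hence the identity.
-/

open Matrix

namespace Matrix

variable {ι : Type*} [Fintype ι]

section DecidableEq

variable [DecidableEq ι]

theorem eq_of_mul_diagonal_eq_mul_diagonal {R : Type*} [CommRing R] [IsDomain R]
    {x x' : Matrix ι ι R} {d d' : ι → R} (hx : ∀ i, x i i = 1) (hx' : ∀ i, x' i i = 1)
    (hd : ∀ i, d i ≠ 0) (h : x * diagonal d = x' * diagonal d') : x = x' ∧ d = d' := by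
  obtain rfl : d = d' := funext fun i => by simpa [hx, hx'] using congrFun₂ h i i
  refine ⟨?_, rfl⟩
  ext i j
  simpa [hd j] using congrFun₂ h i j

theorem exists_mem_orthogonalGroup_eq_mul_of_mul_transpose_eq {R : Type*} [CommRing R]
    {g B : Matrix ι ι R} (hB : IsUnit B.det) (h : g * gᵀ = B * Bᵀ) :
    ∃ k ∈ orthogonalGroup ι R, g = B * k := by
  refine ⟨B⁻¹ * g, ?_, (mul_nonsing_inv_cancel_left B g hB).symm⟩
  rw [mem_orthogonalGroup_iff, transpose_mul, Matrix.mul_assoc, ← Matrix.mul_assoc g, h,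
    transpose_nonsing_inv, Matrix.mul_assoc, mul_nonsing_inv _ (by rwa [det_transpose]),
    Matrix.mul_one, nonsing_inv_mul _ hB]

end DecidableEq

variable [LinearOrder ι]

section Triangular

variable {R : Type*}

theorem IsUpperTriangular.mul_apply_self [NonUnitalNonAssocSemiring R] {M N : Matrix ι ι R}
    (hM : M.IsUpperTriangular) (hN : N.IsUpperTriangular) (i : ι) :
    (M * N) i i = M i i * N i i := by
  rw [mul_apply]
  refine Finset.sum_eq_single i (fun j _ hji => ?_) (by simp)
  rcases hji.lt_or_gt with hji | hij
  · rw [hM hji, zero_mul]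
  · rw [hN hij, mul_zero]

theorem IsUpperTriangular.inv [CommRing R] {M : Matrix ι ι R} (hM : M.IsUpperTriangular) :
    M⁻¹.IsUpperTriangular := by
  by_cases hdet : IsUnit M.det
  · have := M.invertibleOfIsUnitDet hdet
    exact blockTriangular_inv_of_blockTriangular hM
  · rw [nonsing_inv_apply_not_isUnit M hdet]
    exact blockTriangular_zero

theorem IsUpperTriangular.inv_apply_self_mul [CommRing R] {M : Matrix ι ι R}
    (hM : M.IsUpperTriangular) (hdet : IsUnit M.det) (i : ι) : M⁻¹ i i * M i i = 1 := by
  rw [← hM.inv.mul_apply_self hM, nonsing_inv_mul M hdet, one_apply_eq]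

end Triangular

section Orthogonal

variable {K : Type*} [Field K] [LinearOrder K] [IsStrictOrderedRing K]

/-- An orthogonal upper triangular `T` is also lower triangular, since `Tᵀ = T⁻¹`. -/
theorem IsUpperTriangular.eq_one_of_mem_orthogonalGroup {T : Matrix ι ι K}
    (hT : T.IsUpperTriangular) (hpos : ∀ i, 0 < T i i) (hO : T ∈ orthogonalGroup ι K) :
    T = 1 := by
  have hTT : Tᵀ * T = 1 := (mem_orthogonalGroup_iff' ι K).mp hO
  have hTt : Tᵀ.IsUpperTriangular := inv_eq_left_inv hTT ▸ hT.inv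
  ext i j
  rcases lt_trichotomy i j with hij | rfl | hji
  · rw [one_apply_ne hij.ne]
    exact hTt hij
  · have hsq : T i i * T i i = 1 := by
      simpa using (hTt.mul_apply_self hT i).symm.trans (congrFun₂ hTT i i)
    have hTi := hpos i
    rw [one_apply_eq]
    nlinarith
  · rw [one_apply_ne hji.ne']
    exact hT hji

theorem IsUpperTriangular.isUnit_det_of_pos {B : Matrix ι ι K} (hB : B.IsUpperTriangular)
    (hpos : ∀ i, 0 < B i i) : IsUnit B.det := by
  rw [det_of_isUpperTriangular hB]
  exact (Finset.prod_pos fun i _ => hpos i).ne'.isUnit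

theorem IsUpperTriangular.eq_of_mul_eq_mul_of_mem_orthogonalGroup {B B' k k' : Matrix ι ι K}
    (hB : B.IsUpperTriangular) (hB' : B'.IsUpperTriangular) (hpos : ∀ i, 0 < B i i)
    (hpos' : ∀ i, 0 < B' i i) (hk : k ∈ orthogonalGroup ι K) (hk' : k' ∈ orthogonalGroup ι K)
    (h : B * k = B' * k') : B = B' ∧ k = k' := by
  have hdet' := hB'.isUnit_det_of_pos hpos'
  have hT : B'⁻¹ * B = k' * kᵀ := calc
    B'⁻¹ * B = B'⁻¹ * (B * k * kᵀ) := by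
      rw [Matrix.mul_assoc B, (mem_orthogonalGroup_iff ι K).mp hk, Matrix.mul_one]
    _ = k' * kᵀ := by rw [h, Matrix.mul_assoc B', nonsing_inv_mul_cancel_left _ _ hdet']
  have hO : k' * kᵀ ∈ orthogonalGroup ι K := by
    rw [mem_orthogonalGroup_iff, transpose_mul, transpose_transpose, Matrix.mul_assoc,
      ← Matrix.mul_assoc kᵀ, (mem_orthogonalGroup_iff' ι K).mp hk, Matrix.one_mul,
      (mem_orthogonalGroup_iff ι K).mp hk']
  have hT1 : B'⁻¹ * B = 1 := by
    refine IsUpperTriangular.eq_one_of_mem_orthogonalGroup (hB'.inv.mul hB) (fun i => ?_) (hT ▸ hO)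
    rw [hB'.inv.mul_apply_self hB]
    have hinv : 0 < B'⁻¹ i i :=
      pos_of_mul_pos_left ((hB'.inv_apply_self_mul hdet' i).symm ▸ one_pos) (hpos' i).le
    exact mul_pos hinv (hpos i)
  obtain rfl : B = B' := by rw [← mul_nonsing_inv_cancel_left B' B hdet', hT1, Matrix.mul_one]
  exact ⟨rfl, ((isUnit_iff_isUnit_det B).mpr hdet').mul_left_cancel h⟩

theorem IsUpperTriangular.eq_of_mul_diagonal_mul_eq {x x' k k' : Matrix ι ι K} {d d' : ι → K}
    (hx : x.IsUpperTriangular) (hx' : x'.IsUpperTriangular) (hx1 : ∀ i, x i i = 1)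
    (hx1' : ∀ i, x' i i = 1) (hd : ∀ i, 0 < d i) (hd' : ∀ i, 0 < d' i)
    (hk : k ∈ orthogonalGroup ι K) (hk' : k' ∈ orthogonalGroup ι K)
    (h : x * diagonal d * k = x' * diagonal d' * k') : x = x' ∧ d = d' ∧ k = k' := by
  obtain ⟨hxd, rfl⟩ := eq_of_mul_eq_mul_of_mem_orthogonalGroup
    (hx.mul (blockTriangular_diagonal d)) (hx'.mul (blockTriangular_diagonal d'))
    (by simpa [hx1] using hd) (by simpa [hx1'] using hd') hk hk' h
  obtain ⟨rfl, rfl⟩ := eq_of_mul_diagonal_eq_mul_diagonal hx1 hx1' (fun i => (hd i).ne') hxd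
  exact ⟨rfl, rfl, rfl⟩

end Orthogonal

section LDL

variable [WellFoundedLT ι] [LocallyFiniteOrderBot ι]

theorem PosDef.exists_unitLowerTriangular_mul_mul_transpose_eq_diagonal
    {S : Matrix ι ι ℝ} (hS : S.PosDef) :
    ∃ L : Matrix ι ι ℝ, L.IsLowerTriangular ∧ (∀ i, L i i = 1) ∧
      ∃ d : ι → ℝ, (∀ i, 0 < d i) ∧ L * S * Lᵀ = diagonal d := by
  set L₀ := LDL.lowerInv hS
  have hL₀ : L₀.IsLowerTriangular := fun i j hij => LDL.lowerInv_triangular hS hij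
  have hD : L₀ * S * L₀ᵀ = diagonal (LDL.diagEntries hS) := (LDL.diag_eq_lowerInv_conj hS).symm
  have hD_pos (i : ι) : 0 < LDL.diagEntries hS i := by
    have hposDef : (L₀ * S * L₀ᴴ).PosDef :=
      hS.mul_mul_conjTranspose_same (vecMul_injective_iff_isUnit.mpr (isUnit_of_invertible L₀))
    simpa [hD] using hposDef.diag_pos (i := i)
  have hL₀_diag (i : ι) : L₀ i i ≠ 0 := by
    have hdet : L₀.det ≠ 0 := (isUnit_det_of_invertible L₀).ne_zero
    rw [det_of_isLowerTriangular L₀ hL₀] at hdet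
    exact Finset.prod_ne_zero_iff.mp hdet i (Finset.mem_univ i)
  set c : ι → ℝ := fun i => (L₀ i i)⁻¹
  refine ⟨diagonal c * L₀, (blockTriangular_diagonal c).mul hL₀, fun i => ?_,
    fun i => LDL.diagEntries hS i * c i ^ 2, fun i => ?_, ?_⟩
  · simp [c, diagonal_mul, hL₀_diag i]
  · exact mul_pos (hD_pos i) (sq_pos_iff.mpr (inv_ne_zero (hL₀_diag i)))
  · rw [transpose_mul, diagonal_transpose, Matrix.mul_assoc, Matrix.mul_assoc, ← Matrix.mul_assoc S,
      ← Matrix.mul_assoc L₀, ← Matrix.mul_assoc L₀, hD, diagonal_mul_diagonal,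
      diagonal_mul_diagonal]
    congr 1
    ext i
    ring

theorem PosDef.exists_unitUpperTriangular_mul_diagonal_mul_transpose
    {S : Matrix ι ι ℝ} (hS : S.PosDef) :
    ∃ x : Matrix ι ι ℝ, x.IsUpperTriangular ∧ (∀ i, x i i = 1) ∧
      ∃ d : ι → ℝ, (∀ i, 0 < d i) ∧ S = x * diagonal d * xᵀ := by
  obtain ⟨L, hL, hL1, d, hd, hLS⟩ :=
    hS.inv.exists_unitLowerTriangular_mul_mul_transpose_eq_diagonal
  refine ⟨Lᵀ, fun _ _ h => hL h, hL1, d⁻¹, fun i => inv_pos.mpr (hd i), ?_⟩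
  have hLT : IsUnit Lᵀ.det := by
    rw [det_transpose, det_of_isLowerTriangular L hL]
    simp [hL1]
  rw [transpose_transpose, ← nonsing_inv_nonsing_inv S ((isUnit_iff_isUnit_det S).mp hS.isUnit)]
  refine inv_eq_left_inv ?_
  calc Lᵀ * diagonal d⁻¹ * L * S⁻¹ = Lᵀ * diagonal d⁻¹ * (L * S⁻¹ * Lᵀ) * Lᵀ⁻¹ := by
        simp only [Matrix.mul_assoc, mul_nonsing_inv _ hLT, Matrix.mul_one]
    _ = Lᵀ * Lᵀ⁻¹ := by
        have hdd : (fun i => d⁻¹ i * d i) = fun _ => 1 := funext fun i => inv_mul_cancel₀ (hd i).ne'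
        rw [hLS, Matrix.mul_assoc Lᵀ, diagonal_mul_diagonal, hdd, diagonal_one, Matrix.mul_one]
    _ = 1 := mul_nonsing_inv _ hLT

theorem exists_unitUpperTriangular_mul_diagonal_mul_mem_orthogonalGroup {g : Matrix ι ι ℝ}
    (hg : IsUnit g.det) :
    ∃ x : Matrix ι ι ℝ, x.IsUpperTriangular ∧ (∀ i, x i i = 1) ∧ ∃ d : ι → ℝ, (∀ i, 0 < d i) ∧
      ∃ k ∈ orthogonalGroup ι ℝ, g = x * diagonal d * k := by
  have hggT : (g * gᵀ).PosDef := by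
    simpa using PosDef.mul_conjTranspose_self g
      (vecMul_injective_iff_isUnit.mpr ((isUnit_iff_isUnit_det g).mpr hg))
  obtain ⟨x, hx, hx1, d, hd, hggT_eq⟩ := hggT.exists_unitUpperTriangular_mul_diagonal_mul_transpose
  have hsqrt : ∀ i, 0 < √(d i) := fun i => Real.sqrt_pos.mpr (hd i)
  have hsq : (diagonal fun i => √(d i)) * diagonal (fun i => √(d i)) = diagonal d := by
    simp_rw [diagonal_mul_diagonal, Real.mul_self_sqrt (hd _).le]
  obtain ⟨k, hk, hg_eq⟩ := exists_mem_orthogonalGroup_eq_mul_of_mul_transpose_eq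
    (B := x * diagonal fun i => √(d i))
    (IsUpperTriangular.isUnit_det_of_pos (hx.mul (blockTriangular_diagonal _))
      (by simpa [hx1] using hsqrt))
    (by rw [hggT_eq, ← hsq, transpose_mul, diagonal_transpose]; simp only [Matrix.mul_assoc])
  exact ⟨x, hx, hx1, _, hsqrt, k, hk, hg_eq⟩

end LDL

end Matrix

theorem first_coeff_stmt12_general (n : ℕ)
    (g : Matrix (Fin n) (Fin n) ℝ) (hg : IsUnit g.det) :
    ∃! xyk : Matrix (Fin n) (Fin n) ℝ × Matrix (Fin n) (Fin n) ℝ × Matrix (Fin n) (Fin n) ℝ,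
      (∀ i, xyk.1 i i = 1) ∧ (∀ i j : Fin n, j < i → xyk.1 i j = 0) ∧
      (∀ i, 0 < xyk.2.1 i i) ∧ (∀ i j : Fin n, i ≠ j → xyk.2.1 i j = 0) ∧
      xyk.2.2 * xyk.2.2ᵀ = 1 ∧
      g = xyk.1 * xyk.2.1 * xyk.2.2 := by
  obtain ⟨x, hx, hx1, d, hd, k, hk, rfl⟩ :=
    exists_unitUpperTriangular_mul_diagonal_mul_mem_orthogonalGroup hg
  refine ⟨(x, diagonal d, k), ⟨hx1, hx, by simpa using hd, fun i j hij => diagonal_apply_ne _ hij,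
    (mem_orthogonalGroup_iff _ _).mp hk, rfl⟩, ?_⟩
  rintro ⟨x', y', k'⟩ ⟨hx1', hx', hy', hy'_diag, hk', h⟩
  dsimp only at hx1' hx' hy' hy'_diag hk' h
  rw [← IsDiag.diagonal_diag hy'_diag] at h ⊢
  obtain ⟨rfl, rfl, rfl⟩ := IsUpperTriangular.eq_of_mul_diagonal_mul_eq (d := y'.diag) hx' hx hx1'
    hx1 hy' hd ((mem_orthogonalGroup_iff _ _).mpr hk') hk h.symm
  rfl

/-- Iwasawa decomposition for `GL(n,ℝ)`: for every `n ≥ 1` and every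
invertible `n×n` real matrix `g`, there exist a unique upper triangular matrix `x` with
unit diagonal, a unique diagonal matrix `y` with strictly positive diagonal entries, and
a unique orthogonal matrix `k` (i.e. `k·kᵀ = 1`), such that `g = x·y·k`. -/
theorem first_coeff_stmt12 (n : ℕ) (hn : 1 ≤ n)
    (g : Matrix (Fin n) (Fin n) ℝ) (hg : IsUnit g.det) :
    ∃! xyk : Matrix (Fin n) (Fin n) ℝ × Matrix (Fin n) (Fin n) ℝ × Matrix (Fin n) (Fin n) ℝ,
      (∀ i, xyk.1 i i = 1) ∧ (∀ i j : Fin n, j < i → xyk.1 i j = 0) ∧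
      (∀ i, 0 < xyk.2.1 i i) ∧ (∀ i j : Fin n, i ≠ j → xyk.2.1 i j = 0) ∧
      xyk.2.2 * xyk.2.2ᵀ = 1 ∧
      g = xyk.1 * xyk.2.1 * xyk.2.2 :=
  first_coeff_stmt12_general n g hg
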